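/- arXiv:math/0405243 — 3 statements merged into one kernel-verified Lean document; each statement's English description precedes it below -/
import Mathlib

section
/- For A = A(c,d) and σ = σ_λ with λ ∉ {q^{-2n} : n ∈ ℕ} (and λ ≠ 1), the zeroth twisted Hochschild homology HH_0^σ(A) = A/span{a_1 a_2 − σ(a_2)a_1} is 2-dimensional, spanned by the classes [1] and [A]. -/
/-- The defining relations of the Podleś quantum sphere coordinate algebra `A(c,d)`:
`BA = q²AB`, `AB* = q²B*A`, `B*B = cd + (c-d)A - A²`, `BB* = cd + q²(c-d)A - q⁴A²`,
where the generators `A, B, B*` are the images of `0, 1, 2 : Fin 3`. -/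
inductive PodlesRel (k : Type) [Field k] (q c d : k) :
    FreeAlgebra k (Fin 3) → FreeAlgebra k (Fin 3) → Prop
  | BA : PodlesRel k q c d (FreeAlgebra.ι k 1 * FreeAlgebra.ι k 0)
      (q ^ 2 • (FreeAlgebra.ι k 0 * FreeAlgebra.ι k 1))
  | ABs : PodlesRel k q c d (FreeAlgebra.ι k 0 * FreeAlgebra.ι k 2)
      (q ^ 2 • (FreeAlgebra.ι k 2 * FreeAlgebra.ι k 0))
  | BsB : PodlesRel k q c d (FreeAlgebra.ι k 2 * FreeAlgebra.ι k 1)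
      (algebraMap k (FreeAlgebra k (Fin 3)) (c * d) + (c - d) • FreeAlgebra.ι k 0 -
        FreeAlgebra.ι k 0 ^ 2)
  | BBs : PodlesRel k q c d (FreeAlgebra.ι k 1 * FreeAlgebra.ι k 2)
      (algebraMap k (FreeAlgebra k (Fin 3)) (c * d) + (q ^ 2 * (c - d)) • FreeAlgebra.ι k 0 -
        q ^ 4 • FreeAlgebra.ι k 0 ^ 2)

/-- The Podleś quantum sphere coordinate algebra `A(c,d)`. -/
abbrev PodlesAlg (k : Type) [Field k] (q c d : k) := RingQuot (PodlesRel k q c d)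

/-- The generator `A` of `A(c,d)`. -/
noncomputable def pA (k : Type) [Field k] (q c d : k) : PodlesAlg k q c d :=
  RingQuot.mkAlgHom k (PodlesRel k q c d) (FreeAlgebra.ι k 0)

/-- The generator `B` of `A(c,d)`. -/
noncomputable def pB (k : Type) [Field k] (q c d : k) : PodlesAlg k q c d :=
  RingQuot.mkAlgHom k (PodlesRel k q c d) (FreeAlgebra.ι k 1)

/-- The generator `B*` of `A(c,d)`. -/
noncomputable def pBs (k : Type) [Field k] (q c d : k) : PodlesAlg k q c d :=
  RingQuot.mkAlgHom k (PodlesRel k q c d) (FreeAlgebra.ι k 2)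

/-!
The monomials `A^m B^n`, `A^m B*^n` span `A(c,d)`. Twisted commutators with `B` and `B*` give
`(1 - λ q^{2m}) A^m B^{n+1}` and `(1 - λ⁻¹ q^{-2m}) A^m B*^{n+1}`, so every monomial with `n > 0`
vanishes in `HH₀^σ`, and the twisted commutator of `A^s B` with `B*` expresses `A^{s+2}` through
`A^s` and `A^{s+1}` with leading coefficient `q⁴ - λ⁻¹ q^{-2s} ≠ 0`; hence `[1]` and `[A]` span.

For independence, each root `e ∈ {c, -d}` of `cd + (c-d)e - e² = 0` gives a lowest weight
representation of `A(c,d)` on sequences, and `x ↦ ∑_j λ^j ⟨e_j, x e_j⟩`, regularized by summing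
the geometric series `∑_j λ^j q^{2jm} = (1 - λ q^{2m})⁻¹`, is a twisted trace. It takes the value
`(1 - λ)⁻¹` at `1` and `e (1 - λ q²)⁻¹` at `A`, and the two traces separate `[1]` and `[A]`
because `c + d ≠ 0`.
-/

section TwistedCommutators

variable {k R : Type*} [Field k] [Ring R] [Algebra k R]
variable {F : Type*} [FunLike F R R]

def twistedCommutatorSpan (σ : F) : Submodule k R :=
  Submodule.span k {x | ∃ a b, x = a * b - σ b * a}

lemma mem_twistedCommutatorSpan_of_sub_eq_smul {σ : F} {a b x : R} {t : k} (ht : t ≠ 0)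
    (h : a * b - σ b * a = t • x) : x ∈ twistedCommutatorSpan (k := k) σ :=
  (Submodule.smul_mem_iff _ ht).mp (h ▸ Submodule.subset_span ⟨a, b, rfl⟩)

lemma twistedCommutatorSpan_le_ker [AlgHomClass F k R R] {M : Type*} [AddCommGroup M]
    [Module k M] {σ : F} {s : Set R} (hs : Algebra.adjoin k s = ⊤) (φ : R →ₗ[k] M)
    (h : ∀ g ∈ s, ∀ a, φ (a * g) = φ (σ g * a)) :
    twistedCommutatorSpan (k := k) σ ≤ LinearMap.ker φ := by
  have key : ∀ b ∈ Algebra.adjoin k s, ∀ a, φ (a * b) = φ (σ b * a) := by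
    intro b hb
    induction hb using Algebra.adjoin_induction with
    | mem g hg => exact h g hg
    | algebraMap r => intro a; rw [AlgHomClass.commutes, Algebra.commutes]
    | add b₁ b₂ _ _ h₁ h₂ => intro a; simp only [mul_add, add_mul, map_add, h₁, h₂]
    | mul b₁ b₂ _ _ h₁ h₂ =>
      intro a
      rw [← mul_assoc, h₂, ← mul_assoc, h₁, map_mul σ, mul_assoc]
  rw [twistedCommutatorSpan, Submodule.span_le]
  rintro _ ⟨a, b, rfl⟩
  simp [key b (hs ▸ Algebra.mem_top) a]

end TwistedCommutators

lemma Submodule.span_eq_top_of_mul_mem {k R : Type*} [Field k] [Ring R] [Algebra k R]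
    {s S : Set R} (hs : Algebra.adjoin k s = ⊤) (h1 : (1 : R) ∈ Submodule.span k S)
    (hmul : ∀ g ∈ s, ∀ y ∈ S, g * y ∈ Submodule.span k S) : Submodule.span k S = ⊤ := by
  have key : ∀ x ∈ Algebra.adjoin k s, ∀ y ∈ Submodule.span k S, x * y ∈ Submodule.span k S := by
    intro x hx
    induction hx using Algebra.adjoin_induction with
    | mem g hg =>
      intro y hy
      induction hy using Submodule.span_induction with
      | mem y hy => exact hmul g hg y hy
      | zero => simp
      | add y₁ y₂ _ _ h₁ h₂ => rw [mul_add]; exact add_mem h₁ h₂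
      | smul t y _ hy => rw [mul_smul_comm]; exact Submodule.smul_mem _ t hy
    | algebraMap r => intro y hy; rw [← Algebra.smul_def]; exact Submodule.smul_mem _ r hy
    | add x₁ x₂ _ _ h₁ h₂ => intro y hy; rw [add_mul]; exact add_mem (h₁ y hy) (h₂ y hy)
    | mul x₁ x₂ _ _ h₁ h₂ => intro y hy; rw [mul_assoc]; exact h₁ _ (h₂ y hy)
  refine eq_top_iff.mpr fun x _ => ?_
  simpa using key x (hs ▸ Algebra.mem_top) 1 h1

lemma linearIndependent_mkQ_pair {k V : Type*} [Field k] [AddCommGroup V] [Module k V]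
    (N : Submodule k V) {φ ψ : V →ₗ[k] k} (hφ : N ≤ LinearMap.ker φ) (hψ : N ≤ LinearMap.ker ψ)
    {x y : V} (hdet : φ x * ψ y - φ y * ψ x ≠ 0) :
    LinearIndependent k ![N.mkQ x, N.mkQ y] := by
  rw [LinearIndependent.pair_iff]
  intro s t hst
  have hN : s • x + t • y ∈ N := by
    rwa [← map_smul, ← map_smul, ← map_add, Submodule.mkQ_apply,
      Submodule.Quotient.mk_eq_zero] at hst
  have hφ' : s * φ x + t * φ y = 0 := by simpa using hφ hN
  have hψ' : s * ψ x + t * ψ y = 0 := by simpa using hψ hN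
  constructor
  · exact (mul_eq_zero.mp (by linear_combination ψ y * hφ' - φ y * hψ' :
      s * (φ x * ψ y - φ y * ψ x) = 0)).resolve_right hdet
  · exact (mul_eq_zero.mp (by linear_combination φ x * hψ' - ψ x * hφ' :
      t * (φ x * ψ y - φ y * ψ x) = 0)).resolve_right hdet

lemma mul_pow_eq_smul_pow_mul {k R : Type*} [CommSemiring k] [Semiring R] [Algebra k R]
    {a b : R} {t : k} (h : b * a = t • (a * b)) (m : ℕ) : b * a ^ m = t ^ m • (a ^ m * b) := by
  induction m with
  | zero => simp
  | succ m ih =>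
    rw [pow_succ, ← mul_assoc, ih, smul_mul_assoc, mul_assoc, h, mul_smul_comm, smul_smul,
      ← mul_assoc, ← pow_succ, ← pow_succ]

open Polynomial

namespace Podles

variable {k : Type} [Field k] {q c d : k}

local notation "𝐀" => pA k q c d
local notation "𝐁" => pB k q c d
local notation "𝐁⋆" => pBs k q c d

lemma pB_mul_pA : 𝐁 * 𝐀 = q ^ 2 • (𝐀 * 𝐁) := by
  simpa [pA, pB] using RingQuot.mkAlgHom_rel k (PodlesRel.BA (q := q) (c := c) (d := d))

lemma pA_mul_pBs : 𝐀 * 𝐁⋆ = q ^ 2 • (𝐁⋆ * 𝐀) := by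
  simpa [pA, pBs] using RingQuot.mkAlgHom_rel k (PodlesRel.ABs (q := q) (c := c) (d := d))

lemma pBs_mul_pB : 𝐁⋆ * 𝐁 = algebraMap k _ (c * d) + (c - d) • 𝐀 - 𝐀 ^ 2 := by
  simpa [pA, pB, pBs] using RingQuot.mkAlgHom_rel k (PodlesRel.BsB (q := q) (c := c) (d := d))

lemma pB_mul_pBs :
    𝐁 * 𝐁⋆ = algebraMap k _ (c * d) + (q ^ 2 * (c - d)) • 𝐀 - q ^ 4 • 𝐀 ^ 2 := by
  simpa [pA, pB, pBs] using RingQuot.mkAlgHom_rel k (PodlesRel.BBs (q := q) (c := c) (d := d))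

lemma pBs_mul_pA (hq0 : q ≠ 0) : 𝐁⋆ * 𝐀 = (q ^ 2)⁻¹ • (𝐀 * 𝐁⋆) := by
  rw [pA_mul_pBs, inv_smul_smul₀ (pow_ne_zero 2 hq0)]

lemma pB_mul_pA_pow (m : ℕ) : 𝐁 * 𝐀 ^ m = (q ^ 2) ^ m • (𝐀 ^ m * 𝐁) :=
  mul_pow_eq_smul_pow_mul pB_mul_pA m

lemma pBs_mul_pA_pow (hq0 : q ≠ 0) (m : ℕ) : 𝐁⋆ * 𝐀 ^ m = ((q ^ 2)⁻¹) ^ m • (𝐀 ^ m * 𝐁⋆) :=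
  mul_pow_eq_smul_pow_mul (pBs_mul_pA hq0) m

lemma adjoin_pA_pB_pBs : Algebra.adjoin k {𝐀, 𝐁, 𝐁⋆} = ⊤ := by
  have hgen : ({𝐀, 𝐁, 𝐁⋆} : Set (PodlesAlg k q c d)) =
      RingQuot.mkAlgHom k (PodlesRel k q c d) '' Set.range (FreeAlgebra.ι k) := by
    ext x
    simp [pA, pB, pBs, Fin.exists_fin_succ, eq_comm]
  rw [hgen, Algebra.adjoin_image, FreeAlgebra.adjoin_range_ι, Algebra.map_top,
    AlgHom.range_eq_top]
  exact RingQuot.mkAlgHom_surjective k _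

variable (k q c d) in
def monomials : Set (PodlesAlg k q c d) :=
  {x | ∃ m n : ℕ, x = 𝐀 ^ m * 𝐁 ^ n ∨ x = 𝐀 ^ m * 𝐁⋆ ^ n}

lemma pA_pow_mul_pB_pow_mem (m n : ℕ) : 𝐀 ^ m * 𝐁 ^ n ∈ monomials k q c d := ⟨m, n, .inl rfl⟩

lemma pA_pow_mul_pBs_pow_mem (m n : ℕ) : 𝐀 ^ m * 𝐁⋆ ^ n ∈ monomials k q c d := ⟨m, n, .inr rfl⟩

lemma mul_mem_span_monomials {x y : PodlesAlg k q c d} (hx : x ∈ Algebra.adjoin k {𝐀})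
    (hy : y ∈ Submodule.span k (monomials k q c d)) :
    x * y ∈ Submodule.span k (monomials k q c d) := by
  induction hx using Algebra.adjoin_induction generalizing y with
  | mem x hx =>
    rw [Set.mem_singleton_iff.mp hx]
    induction hy using Submodule.span_induction with
    | mem y hy =>
      obtain ⟨m, n, rfl | rfl⟩ := hy <;> rw [← mul_assoc, ← pow_succ'] <;>
        apply Submodule.subset_span
      exacts [pA_pow_mul_pB_pow_mem _ _, pA_pow_mul_pBs_pow_mem _ _]
    | zero => simp
    | add y₁ y₂ _ _ h₁ h₂ => rw [mul_add]; exact add_mem h₁ h₂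
    | smul t y _ hy => rw [mul_smul_comm]; exact Submodule.smul_mem _ t hy
  | algebraMap r => rw [← Algebra.smul_def]; exact Submodule.smul_mem _ r hy
  | add x₁ x₂ _ _ h₁ h₂ => rw [add_mul]; exact add_mem (h₁ hy) (h₂ hy)
  | mul x₁ x₂ _ _ h₁ h₂ => rw [mul_assoc]; exact h₁ (h₂ hy)

lemma pB_mul_pBs_mem_adjoin : 𝐁 * 𝐁⋆ ∈ Algebra.adjoin k {𝐀} := by
  have hA : 𝐀 ∈ Algebra.adjoin k {𝐀} := Algebra.subset_adjoin rfl
  rw [pB_mul_pBs]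
  exact sub_mem (add_mem (Subalgebra.algebraMap_mem _ _) (Subalgebra.smul_mem _ hA _))
    (Subalgebra.smul_mem _ (pow_mem hA 2) _)

lemma pBs_mul_pB_mem_adjoin : 𝐁⋆ * 𝐁 ∈ Algebra.adjoin k {𝐀} := by
  have hA : 𝐀 ∈ Algebra.adjoin k {𝐀} := Algebra.subset_adjoin rfl
  rw [pBs_mul_pB]
  exact sub_mem (add_mem (Subalgebra.algebraMap_mem _ _) (Subalgebra.smul_mem _ hA _))
    (pow_mem hA 2)

lemma span_monomials_eq_top (hq0 : q ≠ 0) :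
    Submodule.span k (monomials k q c d) = ⊤ := by
  have hA : ∀ m, 𝐀 ^ m ∈ Algebra.adjoin k {𝐀} := pow_mem (Algebra.subset_adjoin rfl)
  have hB : ∀ n, 𝐁 ^ n ∈ Submodule.span k (monomials k q c d) := fun n =>
    Submodule.subset_span (by simpa using pA_pow_mul_pB_pow_mem (q := q) (c := c) (d := d) 0 n)
  have hBs : ∀ n, 𝐁⋆ ^ n ∈ Submodule.span k (monomials k q c d) := fun n =>
    Submodule.subset_span (by simpa using pA_pow_mul_pBs_pow_mem (q := q) (c := c) (d := d) 0 n)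
  refine Submodule.span_eq_top_of_mul_mem adjoin_pA_pB_pBs (by simpa using hB 0) ?_
  rintro g (rfl | rfl | rfl) y ⟨m, n, rfl | rfl⟩
  · rw [← mul_assoc, ← pow_succ']
    exact mul_mem_span_monomials (hA _) (hB n)
  · rw [← mul_assoc, ← pow_succ']
    exact mul_mem_span_monomials (hA _) (hBs n)
  · rw [← mul_assoc, pB_mul_pA_pow, smul_mul_assoc, mul_assoc, ← pow_succ']
    exact Submodule.smul_mem _ _ (mul_mem_span_monomials (hA _) (hB _))
  · rw [← mul_assoc, pB_mul_pA_pow, smul_mul_assoc, mul_assoc]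
    refine Submodule.smul_mem _ _ ?_
    cases n with
    | zero => simpa using mul_mem_span_monomials (hA m) (hB 1)
    | succ n =>
      rw [pow_succ', ← mul_assoc 𝐁, ← mul_assoc]
      exact mul_mem_span_monomials (mul_mem (hA m) pB_mul_pBs_mem_adjoin) (hBs n)
  · rw [← mul_assoc, pBs_mul_pA_pow hq0, smul_mul_assoc, mul_assoc]
    refine Submodule.smul_mem _ _ ?_
    cases n with
    | zero => simpa using mul_mem_span_monomials (hA m) (hBs 1)
    | succ n =>
      rw [pow_succ', ← mul_assoc 𝐁⋆, ← mul_assoc]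
      exact mul_mem_span_monomials (mul_mem (hA m) pBs_mul_pB_mem_adjoin) (hB n)
  · rw [← mul_assoc, pBs_mul_pA_pow hq0, smul_mul_assoc, mul_assoc, ← pow_succ']
    exact Submodule.smul_mem _ _ (mul_mem_span_monomials (hA _) (hBs _))

section Coinvariants

variable {F : Type*} [FunLike F (PodlesAlg k q c d) (PodlesAlg k q c d)] {σ : F} {l : k}

lemma pA_pow_mul_pB_pow_succ_mem (hl : ∀ n : ℕ, l * (q ^ 2) ^ n ≠ 1) (hσB : σ 𝐁 = l • 𝐁)
    (m n : ℕ) : 𝐀 ^ m * 𝐁 ^ (n + 1) ∈ twistedCommutatorSpan (k := k) σ := by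
  refine mem_twistedCommutatorSpan_of_sub_eq_smul (a := 𝐀 ^ m * 𝐁 ^ n) (b := 𝐁)
    (sub_ne_zero.mpr (hl m).symm) ?_
  rw [hσB, smul_mul_assoc, ← mul_assoc, pB_mul_pA_pow, smul_mul_assoc, smul_smul, mul_assoc,
    ← pow_succ, mul_assoc, ← pow_succ']
  module

lemma pA_pow_mul_pBs_pow_succ_mem (hq0 : q ≠ 0) (hl : ∀ n : ℕ, l * (q ^ 2) ^ n ≠ 1)
    (hσBs : σ 𝐁⋆ = l⁻¹ • 𝐁⋆) (m n : ℕ) :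
    𝐀 ^ m * 𝐁⋆ ^ (n + 1) ∈ twistedCommutatorSpan (k := k) σ := by
  have hcoeff : 1 - l⁻¹ * ((q ^ 2)⁻¹) ^ m ≠ 0 := by
    rw [inv_pow, ← mul_inv, sub_ne_zero, ne_comm, inv_ne_one]
    exact hl m
  refine mem_twistedCommutatorSpan_of_sub_eq_smul (a := 𝐀 ^ m * 𝐁⋆ ^ n) (b := 𝐁⋆) hcoeff ?_
  rw [hσBs, smul_mul_assoc, ← mul_assoc, pBs_mul_pA_pow hq0, smul_mul_assoc, smul_smul,
    mul_assoc, ← pow_succ, mul_assoc, ← pow_succ']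
  module

lemma pA_pow_add_two_mem (hq0 : q ≠ 0) (hl : ∀ n : ℕ, l * (q ^ 2) ^ n ≠ 1)
    (hσBs : σ 𝐁⋆ = l⁻¹ • 𝐁⋆) (s : ℕ) :
    𝐀 ^ (s + 2) ∈ twistedCommutatorSpan (k := k) σ ⊔ Submodule.span k {𝐀 ^ s, 𝐀 ^ (s + 1)} := by
  set μ := l⁻¹ * ((q ^ 2)⁻¹) ^ s with hμ
  have hγ : q ^ 4 - μ ≠ 0 := by
    intro h
    have hl0 : l ≠ 0 := by
      rintro rfl
      exact pow_ne_zero 4 hq0 (by simpa [μ] using h)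
    apply hl (s + 2)
    have h' : q ^ 4 * l * (q ^ 2) ^ s = 1 := by
      rw [sub_eq_zero.mp h, hμ, inv_pow]
      field_simp
    linear_combination h'
  have hcomm : 𝐀 ^ s * 𝐁 * 𝐁⋆ - σ 𝐁⋆ * (𝐀 ^ s * 𝐁) =
      (c * d * (1 - μ)) • 𝐀 ^ s + ((q ^ 2 - μ) * (c - d)) • 𝐀 ^ (s + 1)
        - (q ^ 4 - μ) • 𝐀 ^ (s + 2) := by
    rw [hσBs, smul_mul_assoc, ← mul_assoc, pBs_mul_pA_pow hq0, smul_mul_assoc, mul_assoc,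
      mul_assoc, pB_mul_pBs, pBs_mul_pB]
    simp only [mul_add, mul_sub, mul_smul_comm, ← Algebra.commutes, ← Algebra.smul_def,
      ← pow_succ, ← pow_add]
    module
  rw [← Submodule.smul_mem_iff _ hγ]
  have hz : 𝐀 ^ s * 𝐁 * 𝐁⋆ - σ 𝐁⋆ * (𝐀 ^ s * 𝐁) ∈ twistedCommutatorSpan (k := k) σ :=
    Submodule.subset_span ⟨_, _, rfl⟩
  have hrest : (c * d * (1 - μ)) • 𝐀 ^ s + ((q ^ 2 - μ) * (c - d)) • 𝐀 ^ (s + 1) ∈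
      Submodule.span k {𝐀 ^ s, 𝐀 ^ (s + 1)} :=
    add_mem (Submodule.smul_mem _ _ (Submodule.subset_span (by simp)))
      (Submodule.smul_mem _ _ (Submodule.subset_span (by simp)))
  have := sub_mem (Submodule.mem_sup_right hrest) (Submodule.mem_sup_left hz)
  rwa [hcomm, sub_sub_cancel] at this

lemma sup_span_one_pA_eq_top (hq0 : q ≠ 0) (hl : ∀ n : ℕ, l * (q ^ 2) ^ n ≠ 1)
    (hσB : σ 𝐁 = l • 𝐁) (hσBs : σ 𝐁⋆ = l⁻¹ • 𝐁⋆) :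
    twistedCommutatorSpan (k := k) σ ⊔ Submodule.span k {1, 𝐀} = ⊤ := by
  set M := twistedCommutatorSpan (k := k) σ ⊔ Submodule.span k {1, 𝐀}
  have hApow : ∀ t, 𝐀 ^ t ∈ M := by
    intro t
    induction t using Nat.twoStepInduction with
    | zero => exact Submodule.mem_sup_right (Submodule.subset_span (by simp))
    | one => exact Submodule.mem_sup_right (Submodule.subset_span (by simp))
    | more s h₀ h₁ =>
      have hle : twistedCommutatorSpan (k := k) σ ⊔ Submodule.span k {𝐀 ^ s, 𝐀 ^ (s + 1)} ≤ M :=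
        sup_le le_sup_left (Submodule.span_le.mpr (Set.pair_subset h₀ h₁))
      exact hle (pA_pow_add_two_mem hq0 hl hσBs s)
  rw [eq_top_iff, ← span_monomials_eq_top hq0, Submodule.span_le]
  rintro _ ⟨m, (_ | n), rfl | rfl⟩
  · simpa using hApow m
  · simpa using hApow m
  · exact Submodule.mem_sup_left (pA_pow_mul_pB_pow_succ_mem hl hσB m n)
  · exact Submodule.mem_sup_left (pA_pow_mul_pBs_pow_succ_mem hq0 hl hσBs m n)

end Coinvariants

-- The regularized value of `∑_{j ≥ 0} l ^ j * p.eval ((q ^ 2) ^ j)`: each geometric series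
-- `∑_j l ^ j * ((q ^ 2) ^ m) ^ j` is replaced by `(1 - l * (q ^ 2) ^ m)⁻¹`.
variable (q) in
noncomputable def qSum (l : k) : k[X] →ₗ[k] k :=
  Polynomial.lsum fun m => (1 - l * (q ^ 2) ^ m)⁻¹ • LinearMap.id

lemma qSum_monomial (l : k) (m : ℕ) (a : k) :
    qSum q l (monomial m a) = (1 - l * (q ^ 2) ^ m)⁻¹ * a := by
  simp [qSum, Polynomial.lsum_apply, Polynomial.sum_monomial_index]

lemma qSum_eq_eval_one_add {l : k} (hl : ∀ n : ℕ, l * (q ^ 2) ^ n ≠ 1) (p : k[X]) :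
    qSum q l p = p.eval 1 + l * qSum q l (p.comp (C (q ^ 2) * X)) := by
  induction p using Polynomial.induction_on' with
  | add p₁ p₂ h₁ h₂ => simp only [map_add, add_comp, eval_add, h₁, h₂]; ring
  | monomial m a =>
    have hm : 1 - l * (q ^ 2) ^ m ≠ 0 := sub_ne_zero.mpr (hl m).symm
    rw [monomial_comp, mul_pow, ← C_pow, ← mul_assoc, ← C_mul, C_mul_X_pow_eq_monomial,
      qSum_monomial, qSum_monomial, eval_monomial, one_pow, mul_one]
    field_simp
    ring

variable (q) in
noncomputable def qEval : k[X] →ₗ[k] (ℕ → k) :=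
  LinearMap.pi fun j => Polynomial.leval ((q ^ 2) ^ j)

lemma qEval_apply (p : k[X]) (j : ℕ) : qEval q p j = p.eval ((q ^ 2) ^ j) := rfl

lemma qEval_comp (p : k[X]) : qEval q (p.comp (C (q ^ 2) * X)) = fun j => qEval q p (j + 1) := by
  funext j
  simp [qEval_apply, pow_succ']

lemma qSum_eq_apply_zero_add {l : k} (hl : ∀ n : ℕ, l * (q ^ 2) ^ n ≠ 1)
    {π : (ℕ → k) →ₗ[k] k[X]} (hπ : ∀ p, π (qEval q p) = p) {f : ℕ → k}
    (hf : f ∈ LinearMap.range (qEval q)) :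
    qSum q l (π f) = f 0 + l * qSum q l (π fun j => f (j + 1)) := by
  obtain ⟨p, rfl⟩ := hf
  rw [← qEval_comp, hπ, hπ, qSum_eq_eval_one_add hl, qEval_apply, pow_zero]

lemma ker_qEval (hq0 : q ≠ 0) (hq : ∀ n : ℕ, 0 < n → q ^ n ≠ 1) :
    LinearMap.ker (qEval q) = ⊥ := by
  have hinj : Function.Injective fun j : ℕ => (q ^ 2) ^ j := by
    intro i j h
    wlog hij : i ≤ j generalizing i j
    · exact (this h.symm (le_of_not_ge hij)).symm
    obtain ⟨t, rfl⟩ := Nat.exists_eq_add_of_le hij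
    have ht : (q ^ 2) ^ t = 1 := by
      simpa [pow_add, hq0] using h
    by_contra hne
    exact hq (2 * t) (by omega) (by rwa [pow_mul])
  refine LinearMap.ker_eq_bot'.mpr fun p hp => p.eq_zero_of_infinite_isRoot ?_
  refine Set.infinite_of_injective_forall_mem hinj fun j => ?_
  simpa [qEval_apply] using congr_fun hp j

section Representation

-- On the basis vector `e_j`, `A` acts by `weight q e j`, `B` sends `e_j` to
-- `coeffB q c d e j • e_{j-1}` and `B*` sends it to `e_{j+1}`; the operators are written in
-- coordinates. The relation `B*B = cd + (c-d)A - A²` at `e_0` needs `coeffB q c d e 0 = 0`,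
-- that is `e = c` or `e = -d`.
variable (q) in
def weight (e : k) (j : ℕ) : k := e * (q ^ 2) ^ j

variable (q c d) in
def coeffB (e : k) (j : ℕ) : k := c * d + (c - d) * weight q e j - weight q e j ^ 2

variable (q) in
noncomputable def opA (e : k) : Module.End k (ℕ → k) :=
  LinearMap.pi fun j => weight q e j • LinearMap.proj j

variable (q c d) in
noncomputable def opB (e : k) : Module.End k (ℕ → k) :=
  LinearMap.pi fun j => coeffB q c d e (j + 1) • LinearMap.proj (j + 1)

variable (k) in
def opBs : Module.End k (ℕ → k) :=
  LinearMap.pi fun | 0 => 0 | j + 1 => LinearMap.proj j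

variable {e : k}

@[simp] lemma opA_apply (v : ℕ → k) (j : ℕ) : opA q e v j = weight q e j * v j := rfl

@[simp] lemma opB_apply (v : ℕ → k) (j : ℕ) :
    opB q c d e v j = coeffB q c d e (j + 1) * v (j + 1) := rfl

@[simp] lemma opBs_apply_zero (v : ℕ → k) : opBs k v 0 = 0 := rfl

@[simp] lemma opBs_apply_succ (v : ℕ → k) (j : ℕ) : opBs k v (j + 1) = v j := rfl

lemma podlesRel_opA_opB_opBs (he : e = c ∨ e = -d) {x y : FreeAlgebra k (Fin 3)}
    (h : PodlesRel k q c d x y) :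
    FreeAlgebra.lift k ![opA q e, opB q c d e, opBs k] x =
      FreeAlgebra.lift k ![opA q e, opB q c d e, opBs k] y := by
  cases h <;> refine LinearMap.ext fun v => funext fun j => ?_
  · simp [weight]; ring
  · cases j
    · simp
    · simp [weight]; ring
  · cases j
    · rcases he with rfl | rfl <;> simp [weight, sq] <;> ring
    · simp [coeffB, weight, sq]; ring
  · simp [coeffB, weight, sq]; ring

variable (q c d) in
noncomputable def rep (he : e = c ∨ e = -d) : PodlesAlg k q c d →ₐ[k] Module.End k (ℕ → k) :=
  RingQuot.liftAlgHom k ⟨_, fun _ _ => podlesRel_opA_opB_opBs he⟩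

@[simp] lemma rep_pA (he : e = c ∨ e = -d) : rep q c d he 𝐀 = opA q e := by
  simp [rep, pA]

@[simp] lemma rep_pB (he : e = c ∨ e = -d) : rep q c d he 𝐁 = opB q c d e := by
  simp [rep, pB]

@[simp] lemma rep_pBs (he : e = c ∨ e = -d) : rep q c d he 𝐁⋆ = opBs k := by
  simp [rep, pBs]

end Representation

section Diagonal

def diag : Module.End k (ℕ → k) →ₗ[k] (ℕ → k) where
  toFun T j := T (Pi.single j 1) j
  map_add' _ _ := rfl
  map_smul' _ _ := rfl

lemma diag_apply (T : Module.End k (ℕ → k)) (j : ℕ) : diag T j = T (Pi.single j 1) j := rfl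

variable {e : k}

lemma opA_single (j : ℕ) : opA q e (Pi.single j 1) = weight q e j • Pi.single j 1 := by
  ext i
  by_cases h : i = j
  · subst h; simp
  · simp [h]

lemma diag_opA_mul (T : Module.End k (ℕ → k)) (j : ℕ) :
    diag (opA q e * T) j = weight q e j * diag T j := rfl

lemma diag_opA_pow_mul (m : ℕ) (T : Module.End k (ℕ → k)) (j : ℕ) :
    diag (opA q e ^ m * T) j = weight q e j ^ m * diag T j := by
  induction m with
  | zero => simp
  | succ m ih => rw [pow_succ', mul_assoc, diag_opA_mul, ih, pow_succ', mul_assoc]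

lemma diag_mul_opA (T : Module.End k (ℕ → k)) : diag (T * opA q e) = diag (opA q e * T) := by
  funext j
  simp [diag_apply, opA_single]

lemma diag_mul_opB_zero (T : Module.End k (ℕ → k)) : diag (T * opB q c d e) 0 = 0 := by
  have : opB q c d e (Pi.single 0 1) = 0 := by ext i; simp
  simp [diag_apply, this]

lemma diag_mul_opB_succ (T : Module.End k (ℕ → k)) (j : ℕ) :
    diag (T * opB q c d e) (j + 1) = diag (opB q c d e * T) j := by
  have : opB q c d e (Pi.single (j + 1) 1) = coeffB q c d e (j + 1) • Pi.single j 1 := by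
    ext i
    by_cases h : i = j
    · subst h; simp
    · simp [h]
  simp [diag_apply, this]

lemma opBs_single (j : ℕ) : opBs k (Pi.single j 1) = Pi.single (j + 1) 1 := by
  ext (_ | i)
  · simp
  · by_cases h : i = j
    · subst h; simp
    · simp [h]

lemma diag_opBs_mul_zero (T : Module.End k (ℕ → k)) : diag (opBs k * T) 0 = 0 := rfl

lemma diag_opBs_mul_succ (T : Module.End k (ℕ → k)) (j : ℕ) :
    diag (opBs k * T) (j + 1) = diag (T * opBs k) j := by
  simp [diag_apply, opBs_single]

lemma opB_pow_single_apply {i j n : ℕ} (h : i < j + n) :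
    (opB q c d e ^ n) (Pi.single i 1) j = 0 := by
  induction n generalizing j with
  | zero => simp [Pi.single_apply]; omega
  | succ n ih => rw [pow_succ', Module.End.mul_apply, opB_apply, ih (by omega), mul_zero]

lemma opBs_pow_single_apply {i j n : ℕ} (h : j < i + n) :
    (opBs k ^ n) (Pi.single i 1) j = 0 := by
  induction n generalizing j with
  | zero => simp [Pi.single_apply]; omega
  | succ n ih =>
    rw [pow_succ', Module.End.mul_apply]
    cases j with
    | zero => rfl
    | succ j => exact ih (by omega)

end Diagonal

section TwistedTrace

variable {e : k}

lemma diag_rep_mem_range (hq0 : q ≠ 0) (he : e = c ∨ e = -d) (x : PodlesAlg k q c d) :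
    diag (rep q c d he x) ∈ LinearMap.range (qEval q) := by
  have hx : x ∈ Submodule.span k (monomials k q c d) := by
    rw [span_monomials_eq_top hq0]; trivial
  refine (Submodule.span_le (p := (LinearMap.range (qEval q)).comap
    (diag ∘ₗ (rep q c d he).toLinearMap))).mpr ?_ hx
  have hpowA : ∀ m, diag (opA q e ^ m) = qEval q ((C e * X) ^ m) := fun m => by
    funext j
    simpa [qEval_apply, weight, diag_apply] using diag_opA_pow_mul (q := q) (e := e) m 1 j
  rintro _ ⟨m, (_ | n), rfl | rfl⟩
  · exact ⟨_, by simpa using (hpowA m).symm⟩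
  · exact ⟨_, by simpa using (hpowA m).symm⟩
  · refine ⟨0, funext fun j => ?_⟩
    simp only [map_zero, Pi.zero_apply, LinearMap.coe_comp, Function.comp_apply,
      AlgHom.toLinearMap_apply, map_mul, map_pow, rep_pA, rep_pB]
    rw [diag_opA_pow_mul, diag_apply, opB_pow_single_apply (by omega), mul_zero]
  · refine ⟨0, funext fun j => ?_⟩
    simp only [map_zero, Pi.zero_apply, LinearMap.coe_comp, Function.comp_apply,
      AlgHom.toLinearMap_apply, map_mul, map_pow, rep_pA, rep_pBs]
    rw [diag_opA_pow_mul, diag_apply, opBs_pow_single_apply (by omega), mul_zero]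

variable {l : k} (π : (ℕ → k) →ₗ[k] k[X])

-- Formally `x ↦ ∑_j l ^ j * (rep x e_j)_j`. The diagonal of `rep x` is `qEval q p` for a
-- polynomial `p` (`diag_rep_mem_range`), which a left inverse `π` of `qEval q` recovers.
variable (q c d l) in
noncomputable def twistedTrace (he : e = c ∨ e = -d) : PodlesAlg k q c d →ₗ[k] k :=
  qSum q l ∘ₗ π ∘ₗ diag ∘ₗ (rep q c d he).toLinearMap

variable (he : e = c ∨ e = -d)

lemma twistedTrace_apply (x : PodlesAlg k q c d) :
    twistedTrace q c d l π he x = qSum q l (π (diag (rep q c d he x))) := rfl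

lemma twistedTrace_one (hπ : ∀ p, π (qEval q p) = p) :
    twistedTrace q c d l π he 1 = (1 - l)⁻¹ := by
  have : diag (rep q c d he 1) = qEval q (monomial 0 1) := by
    funext j
    simp [diag_apply, qEval_apply]
  rw [twistedTrace_apply, this, hπ, qSum_monomial]
  simp

lemma twistedTrace_pA (hπ : ∀ p, π (qEval q p) = p) :
    twistedTrace q c d l π he 𝐀 = e * (1 - l * q ^ 2)⁻¹ := by
  have : diag (rep q c d he 𝐀) = qEval q (monomial 1 e) := by
    funext j
    simp [diag_apply, qEval_apply, weight]
  rw [twistedTrace_apply, this, hπ, qSum_monomial, pow_one, mul_comm]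

lemma twistedTrace_mul_pA (a : PodlesAlg k q c d) :
    twistedTrace q c d l π he (a * 𝐀) = twistedTrace q c d l π he (𝐀 * a) := by
  simp only [twistedTrace_apply, map_mul, rep_pA, diag_mul_opA]

lemma twistedTrace_mul_pB (hπ : ∀ p, π (qEval q p) = p) (hq0 : q ≠ 0)
    (hl : ∀ n : ℕ, l * (q ^ 2) ^ n ≠ 1) (a : PodlesAlg k q c d) :
    twistedTrace q c d l π he (a * 𝐁) = l * twistedTrace q c d l π he (𝐁 * a) := by
  have hf := diag_rep_mem_range hq0 he (a * 𝐁)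
  simp only [twistedTrace_apply, map_mul, rep_pB] at hf ⊢
  rw [qSum_eq_apply_zero_add hl hπ hf, diag_mul_opB_zero, zero_add]
  simp only [diag_mul_opB_succ]

lemma twistedTrace_pBs_mul (hπ : ∀ p, π (qEval q p) = p) (hq0 : q ≠ 0)
    (hl : ∀ n : ℕ, l * (q ^ 2) ^ n ≠ 1) (a : PodlesAlg k q c d) :
    twistedTrace q c d l π he (𝐁⋆ * a) = l * twistedTrace q c d l π he (a * 𝐁⋆) := by
  have hf := diag_rep_mem_range hq0 he (𝐁⋆ * a)
  simp only [twistedTrace_apply, map_mul, rep_pBs] at hf ⊢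
  rw [qSum_eq_apply_zero_add hl hπ hf, diag_opBs_mul_zero, zero_add]
  simp only [diag_opBs_mul_succ]

lemma twistedCommutatorSpan_le_ker_twistedTrace {F : Type*}
    [FunLike F (PodlesAlg k q c d) (PodlesAlg k q c d)]
    [AlgHomClass F k (PodlesAlg k q c d) (PodlesAlg k q c d)] {σ : F}
    (hσA : σ 𝐀 = 𝐀) (hσB : σ 𝐁 = l • 𝐁) (hσBs : σ 𝐁⋆ = l⁻¹ • 𝐁⋆)
    (hπ : ∀ p, π (qEval q p) = p) (hq0 : q ≠ 0) (hl0 : l ≠ 0)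
    (hl : ∀ n : ℕ, l * (q ^ 2) ^ n ≠ 1) :
    twistedCommutatorSpan (k := k) σ ≤ LinearMap.ker (twistedTrace q c d l π he) := by
  refine twistedCommutatorSpan_le_ker adjoin_pA_pB_pBs _ ?_
  rintro g (rfl | rfl | rfl) a
  · rw [hσA, twistedTrace_mul_pA]
  · rw [hσB, smul_mul_assoc, map_smul, smul_eq_mul, twistedTrace_mul_pB π he hπ hq0 hl]
  · rw [hσBs, smul_mul_assoc, map_smul, smul_eq_mul, twistedTrace_pBs_mul π he hπ hq0 hl,
      inv_mul_cancel_left₀ hl0]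

end TwistedTrace

end Podles

open Podles

theorem podles_HH0_two_dimensional_general (k : Type) [Field k] (q c d : k)
    (hq0 : q ≠ 0) (hq : ∀ n : ℕ, 0 < n → q ^ n ≠ 1) (hcd : c + d ≠ 0)
    (l : k) (hl0 : l ≠ 0) (hl : ∀ n : ℕ, l ≠ (q ^ (2 * n))⁻¹)
    (σ : PodlesAlg k q c d ≃ₐ[k] PodlesAlg k q c d)
    (hσA : σ (pA k q c d) = pA k q c d)
    (hσB : σ (pB k q c d) = l • pB k q c d)
    (hσBs : σ (pBs k q c d) = l⁻¹ • pBs k q c d)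
    (N : Submodule k (PodlesAlg k q c d))
    (hN : N = Submodule.span k {x : PodlesAlg k q c d | ∃ a b, x = a * b - σ b * a}) :
    LinearIndependent k ![N.mkQ 1, N.mkQ (pA k q c d)] ∧
    Submodule.span k {N.mkQ 1, N.mkQ (pA k q c d)} = ⊤ := by
  subst hN
  have hl' : ∀ n : ℕ, l * (q ^ 2) ^ n ≠ 1 := fun n h =>
    hl n (by rw [pow_mul]; exact eq_inv_of_mul_eq_one_left h)
  obtain ⟨π, hπ⟩ := LinearMap.exists_leftInverse_of_injective _ (ker_qEval hq0 hq)
  replace hπ : ∀ p, π (qEval q p) = p := LinearMap.congr_fun hπ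
  have hτ {e : k} (he : e = c ∨ e = -d) :=
    twistedCommutatorSpan_le_ker_twistedTrace π he hσA hσB hσBs hπ hq0 hl0 hl'
  constructor
  · refine linearIndependent_mkQ_pair _ (hτ (.inl rfl)) (hτ (.inr rfl)) ?_
    simp only [twistedTrace_one π _ hπ, twistedTrace_pA π _ hπ]
    have h₀ : 1 - l ≠ 0 := sub_ne_zero.mpr (by simpa using (hl' 0).symm)
    have h₁ : 1 - l * q ^ 2 ≠ 0 := sub_ne_zero.mpr (by simpa using (hl' 1).symm)
    field_simp
    exact div_ne_zero (fun h => hcd (by linear_combination -h)) (mul_ne_zero h₀ h₁)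
  · rw [← Set.image_pair, ← Submodule.map_span, Submodule.map_mkQ_eq_top]
    exact sup_span_one_pA_eq_top hq0 hl' hσB hσBs

/-- For `σ = σ_λ` with `λ ∉ {q^{-2n} : n ∈ ℕ}` (in particular `λ ≠ 1`), the zeroth twisted
Hochschild homology `HH₀^σ(A) = A / span{a₁a₂ − σ(a₂)a₁}` of `A = A(c,d)` is 2-dimensional,
spanned by the classes `[1]` and `[A]`. -/
theorem podles_HH0_two_dimensional (k : Type) [Field k] [CharZero k] (q c d : k)
    (hq0 : q ≠ 0) (hq : ∀ n : ℕ, 0 < n → q ^ n ≠ 1) (hcd : c + d ≠ 0)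
    (l : k) (hl0 : l ≠ 0) (hl : ∀ n : ℕ, l ≠ (q ^ (2 * n))⁻¹)
    (σ : PodlesAlg k q c d ≃ₐ[k] PodlesAlg k q c d)
    (hσA : σ (pA k q c d) = pA k q c d)
    (hσB : σ (pB k q c d) = l • pB k q c d)
    (hσBs : σ (pBs k q c d) = l⁻¹ • pBs k q c d)
    (N : Submodule k (PodlesAlg k q c d))
    (hN : N = Submodule.span k {x : PodlesAlg k q c d | ∃ a b, x = a * b - σ b * a}) :
    LinearIndependent k ![N.mkQ 1, N.mkQ (pA k q c d)] ∧
    Submodule.span k {N.mkQ 1, N.mkQ (pA k q c d)} = ⊤ :=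
  podles_HH0_two_dimensional_general k q c d hq0 hq hcd l hl0 hl σ hσA hσB hσBs N hN
end

section
/- For σ = id on A = A(c,d), the class [A^m B^n] in HH_0(A) = A/[A,A] vanishes unless m = 0 or n = 0; similarly [A^m (B*)^n] = 0 unless m = 0 or n = 0. -/
/-!
A monomial `x y` whose factors `q`-commute, `y x = t • x y` with `t ≠ 1`, is a multiple of the
commutator `y x - x y = (t - 1) • x y`, hence dies in `A/[A,A]`. In `A(c,d)` the relations give
`Bⁿ Aᵐ = q^(2mn) • Aᵐ Bⁿ` and `Aᵐ (B*)ⁿ = q^(2mn) • (B*)ⁿ Aᵐ`, and `q^(2mn) ≠ 1` once `m, n > 0`.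
-/

section QCommuting

variable {k R : Type*}

section Semiring

variable [CommSemiring k] [Semiring R] [Algebra k R] {a b : R} {t : k}

theorem mul_pow_eq_smul_of_mul_eq_smul (h : b * a = t • (a * b)) (m : ℕ) :
    b * a ^ m = t ^ m • (a ^ m * b) := by
  induction m with
  | zero => simp
  | succ m ih =>
    rw [pow_succ, ← mul_assoc, ih, smul_mul_assoc, mul_assoc, h, mul_smul_comm, smul_smul,
      ← mul_assoc, ← pow_succ, pow_succ]

theorem pow_mul_pow_eq_smul_of_mul_eq_smul (h : b * a = t • (a * b)) (m n : ℕ) :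
    b ^ n * a ^ m = t ^ (m * n) • (a ^ m * b ^ n) := by
  induction n with
  | zero => simp
  | succ n ih =>
    rw [pow_succ', mul_assoc, ih, mul_smul_comm, ← mul_assoc,
      mul_pow_eq_smul_of_mul_eq_smul h, smul_mul_assoc, smul_smul, mul_assoc, ← pow_succ',
      ← pow_add, Nat.mul_succ, add_comm (m * n)]

end Semiring

variable [Field k] [Ring R] [Algebra k R] {N : Submodule k R}
  (hN : ∀ x y : R, x * y - y * x ∈ N) {a b : R} {t : k}
include hN

theorem mul_mem_of_mul_eq_smul_of_commutators_mem (ht : t ≠ 1) (h : b * a = t • (a * b)) :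
    a * b ∈ N := by
  have hsub : b * a - a * b = (t - 1) • (a * b) := by rw [h, sub_smul, one_smul]
  have h_eq : a * b = (t - 1)⁻¹ • (b * a - a * b) := by
    rw [hsub, smul_smul, inv_mul_cancel₀ (sub_ne_zero.mpr ht), one_smul]
  rw [h_eq]
  exact N.smul_mem _ (hN b a)

theorem mul_mem_of_mul_eq_smul_swap_of_commutators_mem (ht : t ≠ 1) (h : a * b = t • (b * a)) :
    a * b ∈ N := by
  rw [h]
  exact N.smul_mem _ (mul_mem_of_mul_eq_smul_of_commutators_mem hN ht h)

end QCommuting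

section Podles

variable (k : Type) [Field k] (q c d : k)

theorem pB_mul_pA : pB k q c d * pA k q c d = q ^ 2 • (pA k q c d * pB k q c d) := by
  simpa [pA, pB] using RingQuot.mkAlgHom_rel k (PodlesRel.BA : PodlesRel k q c d _ _)

theorem pA_mul_pBs : pA k q c d * pBs k q c d = q ^ 2 • (pBs k q c d * pA k q c d) := by
  simpa [pA, pBs] using RingQuot.mkAlgHom_rel k (PodlesRel.ABs : PodlesRel k q c d _ _)

end Podles

theorem podles_HH0_id_mixed_monomials_general (k : Type) [Field k] (q c d : k)
    (hq : ∀ n : ℕ, 0 < n → q ^ n ≠ 1)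
    (N : Submodule k (PodlesAlg k q c d))
    (hN : N = Submodule.span k {x : PodlesAlg k q c d | ∃ a b, x = a * b - b * a}) :
    ∀ m n : ℕ, ¬(m = 0 ∨ n = 0) →
      N.mkQ ((pA k q c d) ^ m * (pB k q c d) ^ n) = 0 ∧
      N.mkQ ((pA k q c d) ^ m * (pBs k q c d) ^ n) = 0 := by
  intro m n hmn
  obtain ⟨hm, hn⟩ := not_or.mp hmn
  have h_comm : ∀ x y : PodlesAlg k q c d, x * y - y * x ∈ N := fun x y =>
    hN ▸ Submodule.subset_span ⟨x, y, rfl⟩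
  have ht : (q ^ 2) ^ (m * n) ≠ 1 := by
    rw [← pow_mul]
    exact hq _ (Nat.pos_of_ne_zero (by simp [hm, hn]))
  refine ⟨(Submodule.Quotient.mk_eq_zero N).2 ?_, (Submodule.Quotient.mk_eq_zero N).2 ?_⟩
  · exact mul_mem_of_mul_eq_smul_of_commutators_mem h_comm ht
      (pow_mul_pow_eq_smul_of_mul_eq_smul (pB_mul_pA k q c d) m n)
  · rw [mul_comm m n] at ht
    exact mul_mem_of_mul_eq_smul_swap_of_commutators_mem h_comm ht
      (pow_mul_pow_eq_smul_of_mul_eq_smul (pA_mul_pBs k q c d) n m)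

/-- For `σ = id` on `A = A(c,d)`, the class `[Aᵐ Bⁿ]` in `HH₀(A) = A/[A,A]` vanishes unless
`m = 0` or `n = 0`; similarly `[Aᵐ (B*)ⁿ] = 0` unless `m = 0` or `n = 0`. -/
theorem podles_HH0_id_mixed_monomials (k : Type) [Field k] [CharZero k] (q c d : k)
    (hq0 : q ≠ 0) (hq : ∀ n : ℕ, 0 < n → q ^ n ≠ 1) (hcd : c + d ≠ 0)
    (N : Submodule k (PodlesAlg k q c d))
    (hN : N = Submodule.span k {x : PodlesAlg k q c d | ∃ a b, x = a * b - b * a}) :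
    ∀ m n : ℕ, ¬(m = 0 ∨ n = 0) →
      N.mkQ ((pA k q c d) ^ m * (pB k q c d) ^ n) = 0 ∧
      N.mkQ ((pA k q c d) ^ m * (pBs k q c d) ^ n) = 0 :=
  podles_HH0_id_mixed_monomials_general k q c d hq N hN
end

section
/- In HH_0^σ(A(S_q^2)) with σ(A) = A, σ(B) = q^2 B, σ(B*) = q^{-2}B*, the relation (1 − q^{2s+4})[A^{s+1}] = (1 − q^4)[A] holds for all s ≥ 0. -/
/-!
Apply the twisted trace property `[a b] = [σ(b) a]` to `a = B*`, `b = B A^s`. On one side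
`B* B A^s = A^{s+1} - A^{s+2}`; on the other, moving `B*` past `A^s` and using `B B*` gives
`σ(B A^s) B* = q^{2s+2} B B* A^s = q^{2s+4} A^{s+1} - q^{2s+6} A^{s+2}`. Hence
`(1 - q^{2s+4})[A^{s+1}] = (1 - q^{2s+6})[A^{s+2}]` for every `s`, and the relation follows by
induction on `s`.
-/

section PodlesRelations
variable (k : Type) [Field k] (q c d : k)

theorem pBs_mul_pB : pBs k q c d * pB k q c d =
    algebraMap k _ (c * d) + (c - d) • pA k q c d - pA k q c d ^ 2 := by
  simpa [pA, pB, pBs] using RingQuot.mkAlgHom_rel k (PodlesRel.BsB (q := q) (c := c) (d := d))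

theorem pB_mul_pBs : pB k q c d * pBs k q c d =
    algebraMap k _ (c * d) + (q ^ 2 * (c - d)) • pA k q c d - q ^ 4 • pA k q c d ^ 2 := by
  simpa [pA, pB, pBs] using RingQuot.mkAlgHom_rel k (PodlesRel.BBs (q := q) (c := c) (d := d))

theorem pA_pow_mul_pBs (s : ℕ) :
    pA k q c d ^ s * pBs k q c d = q ^ (2 * s) • (pBs k q c d * pA k q c d ^ s) := by
  induction s with
  | zero => simp
  | succ n ih =>
    rw [pow_succ, mul_assoc, pA_mul_pBs, mul_smul_comm, ← mul_assoc, ih, smul_mul_assoc,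
      smul_smul, mul_assoc, ← pow_succ, ← pow_add]
    ring_nf

end PodlesRelations

section TwistedCommutators
variable {k R : Type*} [CommRing k] [Ring R] [Algebra k R]

/-- `HH₀^σ(R)` is the quotient `R ⧸ twistedCommutators σ`. -/
def twistedCommutators (σ : R ≃ₐ[k] R) : Submodule k R :=
  Submodule.span k {x | ∃ a b, x = a * b - σ b * a}

theorem twistedCommutators.mkQ_mul (σ : R ≃ₐ[k] R) (a b : R) :
    (twistedCommutators σ).mkQ (a * b) = (twistedCommutators σ).mkQ (σ b * a) :=
  (Submodule.Quotient.eq _).2 (Submodule.subset_span ⟨a, b, rfl⟩)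

end TwistedCommutators

theorem standardPodles_mkQ_pow_succ_recurrence {k : Type} [Field k] (q : k)
    (σ : PodlesAlg k q 1 0 ≃ₐ[k] PodlesAlg k q 1 0)
    (hσA : σ (pA k q 1 0) = pA k q 1 0) (hσB : σ (pB k q 1 0) = q ^ 2 • pB k q 1 0) (s : ℕ) :
    (1 - q ^ (2 * s + 4)) • (twistedCommutators σ).mkQ (pA k q 1 0 ^ (s + 1)) =
      (1 - q ^ (2 * s + 6)) • (twistedCommutators σ).mkQ (pA k q 1 0 ^ (s + 2)) := by
  set A := pA k q 1 0
  set B := pB k q 1 0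
  set Bs := pBs k q 1 0
  have hL : Bs * (B * A ^ s) = A ^ (s + 1) - A ^ (s + 2) := by
    rw [← mul_assoc, pBs_mul_pB]
    simp only [mul_zero, map_zero, sub_zero, one_smul, zero_add]
    rw [sub_mul, ← pow_succ', ← pow_add, add_comm 2 s]
  have hR : σ (B * A ^ s) * Bs =
      q ^ (2 * s + 4) • A ^ (s + 1) - q ^ (2 * s + 6) • A ^ (s + 2) := by
    rw [map_mul, map_pow, hσA, hσB, smul_mul_assoc, smul_mul_assoc, mul_assoc, pA_pow_mul_pBs,
      mul_smul_comm, ← mul_assoc, pB_mul_pBs]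
    simp only [mul_zero, map_zero, sub_zero, mul_one, zero_add]
    rw [sub_mul, smul_mul_assoc, smul_mul_assoc, ← pow_succ', ← pow_add, add_comm 2 s,
      smul_sub, smul_sub, smul_smul, smul_smul, smul_smul, smul_smul]
    congr 2 <;> ring
  have h := twistedCommutators.mkQ_mul σ Bs (B * A ^ s)
  rw [hL, hR, map_sub, map_sub, map_smul, map_smul] at h
  rw [sub_smul, sub_smul, one_smul, one_smul]
  linear_combination (norm := module) h

theorem standard_podles_HH0_relation_general (q : ℝ)
    (σ : PodlesAlg ℂ (q : ℂ) 1 0 ≃ₐ[ℂ] PodlesAlg ℂ (q : ℂ) 1 0)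
    (hσA : σ (pA ℂ (q : ℂ) 1 0) = pA ℂ (q : ℂ) 1 0)
    (hσB : σ (pB ℂ (q : ℂ) 1 0) = ((q : ℂ) ^ 2) • pB ℂ (q : ℂ) 1 0)
    (N : Submodule ℂ (PodlesAlg ℂ (q : ℂ) 1 0))
    (hN : N = Submodule.span ℂ {x : PodlesAlg ℂ (q : ℂ) 1 0 | ∃ a b, x = a * b - σ b * a}) :
    ∀ s : ℕ, (1 - (q : ℂ) ^ (2 * s + 4)) • N.mkQ ((pA ℂ (q : ℂ) 1 0) ^ (s + 1)) =
      (1 - (q : ℂ) ^ 4) • N.mkQ (pA ℂ (q : ℂ) 1 0) := by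
  change N = twistedCommutators σ at hN
  subst hN
  intro s
  induction s with
  | zero => norm_num
  | succ n ih =>
    rw [← ih, standardPodles_mkQ_pow_succ_recurrence (q : ℂ) σ hσA hσB n]
    ring_nf

/-- In `HH₀^σ(A(S²_q))` (for the standard Podleś sphere `A(1,0)`) with `σ(A) = A`,
`σ(B) = q²B`, `σ(B*) = q⁻²B*`, the relation `(1 − q^{2s+4})[A^{s+1}] = (1 − q⁴)[A]` holds for
all `s ≥ 0`. -/
theorem standard_podles_HH0_relation (q : ℝ) (hq0 : 0 < q) (hq1 : q < 1)
    (σ : PodlesAlg ℂ (q : ℂ) 1 0 ≃ₐ[ℂ] PodlesAlg ℂ (q : ℂ) 1 0)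
    (hσA : σ (pA ℂ (q : ℂ) 1 0) = pA ℂ (q : ℂ) 1 0)
    (hσB : σ (pB ℂ (q : ℂ) 1 0) = ((q : ℂ) ^ 2) • pB ℂ (q : ℂ) 1 0)
    (hσBs : σ (pBs ℂ (q : ℂ) 1 0) = ((q : ℂ) ^ 2)⁻¹ • pBs ℂ (q : ℂ) 1 0)
    (N : Submodule ℂ (PodlesAlg ℂ (q : ℂ) 1 0))
    (hN : N = Submodule.span ℂ {x : PodlesAlg ℂ (q : ℂ) 1 0 | ∃ a b, x = a * b - σ b * a}) :
    ∀ s : ℕ, (1 - (q : ℂ) ^ (2 * s + 4)) • N.mkQ ((pA ℂ (q : ℂ) 1 0) ^ (s + 1)) =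
      (1 - (q : ℂ) ^ 4) • N.mkQ (pA ℂ (q : ℂ) 1 0) :=
  standard_podles_HH0_relation_general q σ hσA hσB N hN
end
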